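/- arXiv:1305.4704 — 2 statements merged into one kernel-verified Lean document; each statement's English description precedes it below -/
import Mathlib

section
/- Let {(x^t, y^t, z^t)} be generated by the proximal AMA applied to min f(x)+g(y) s.t. Ax+By=c, and suppose assumption A1 holds. Suppose the parameters β>0, T ⪰ 0 and γ>0 satisfy: (i) Σ_g + T + βB*B ≻ 0; (ii) for some μ>0, 2Σ_f − (β+μ)A*A ≻ 0 and γ < 1 + min{β,μ}/(2β). Then the sequence {(x^t, y^t, z^t)} converges to a limit (x⋄, y⋄, z⋄) satisfying A*z⋄ ∈ ∂f(x⋄), B*z⋄ ∈ ∂g(y⋄) and Ax⋄ + By⋄ = c; in particular (x^t, y^t) converges to an optimal solution of the primal problem and z^t converges to an optimal solution of its dual. -/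
/-!
Fix a KKT point `(x̄, ȳ, z̄)` and let `Φₜ = ‖zₜ - z̄‖² + γβ ⟪yₜ - ȳ, T (yₜ - ȳ)⟫`. Testing the
strong monotonicity of `∂f` and `∂g` with the subgradients certified by the two subproblems and
expanding the multiplier update, the cross terms with `zₜ - z̄` cancel, and the step-size
conditions leave
`Φₜ₊₁ + γβ (ε ‖xₜ₊₁ - x̄‖² + 2 ‖yₜ₊₁ - ȳ‖²_Sg + ‖yₜ₊₁ - yₜ‖²_T + η ‖B (yₜ₊₁ - ȳ)‖²) ≤ Φₜ`
with `ε, η > 0`. Hence `xₜ → x̄`, the residual `A xₜ + B yₜ - c` tends to `0`, and, by condition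
(i), `(yₜ₊₁, zₜ)` is bounded. Subgradient graphs of closed functions are closed, so a cluster
point `(y⋄, z⋄)` makes `(x̄, y⋄, z⋄)` a KKT point. The Lyapunov function centred there is
antitone and tends to `0` along the subsequence, hence everywhere, and condition (i) once more
turns this into `yₜ → y⋄`, `zₜ → z⋄`. Optimality of the limit is the sum of its two subgradient
inequalities.
-/

open RealInnerProductSpace Filter Topology

def IsSubgradAt {E : Type*} [NormedAddCommGroup E] [InnerProductSpace ℝ E]
    (f : E → EReal) (v x : E) : Prop :=
  ∀ u, f x + ((⟪v, u - x⟫ : ℝ) : EReal) ≤ f u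

section Subgradient

variable {E : Type*} [NormedAddCommGroup E] [InnerProductSpace ℝ E] {f : E → EReal}

theorem isSubgradAt_of_forall_add_neg_inner_le {v x₀ : E}
    (h : ∀ x, f x₀ + ((-⟪v, x₀⟫ : ℝ) : EReal) ≤ f x + ((-⟪v, x⟫ : ℝ) : EReal)) :
    IsSubgradAt f v x₀ := by
  intro x
  have := add_le_add_left (h x) ((⟪v, x⟫ : ℝ) : EReal)
  rwa [add_assoc, add_assoc, ← EReal.coe_add, ← EReal.coe_add, neg_add_cancel, EReal.coe_zero,
    add_zero, neg_add_eq_sub, ← inner_sub_right] at this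

theorem isSubgradAt_of_forall_add_le (hne : ∀ x, f x ≠ ⊥)
    (hcvx : ∀ (x₁ x₂ : E) (a b : ℝ), 0 ≤ a → 0 ≤ b → a + b = 1 →
      f (a • x₁ + b • x₂) ≤ (a : EReal) * f x₁ + (b : EReal) * f x₂)
    {q Q : E → ℝ} {v x₀ : E}
    (hq : ∀ w (l : ℝ), q (x₀ + l • w) ≤ q x₀ - l * ⟪v, w⟫ + l ^ 2 * Q w)
    (h : ∀ x, f x₀ + (q x₀ : EReal) ≤ f x + (q x : EReal)) :
    IsSubgradAt f v x₀ := by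
  intro x
  obtain hx | hx := eq_or_ne (f x) ⊤
  · simp [hx]
  have hmin := h x
  lift f x to ℝ using ⟨hx, hne x⟩ with F hF
  have hx₀ : f x₀ ≠ ⊤ := fun h₀ => by
    simp [h₀, ← EReal.coe_add] at hmin
  lift f x₀ to ℝ using ⟨hx₀, hne x₀⟩ with F₀ hF₀
  norm_cast
  set w := x - x₀
  -- `x₀` beats `x₀ + l • w`, where convexity bounds `f`; then let `l → 0⁺`
  have hslope : ∀ l ∈ Set.Ioo (0 : ℝ) 1, ⟪v, w⟫ ≤ F - F₀ + l * Q w := by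
    rintro l ⟨hl₀, hl₁⟩
    have hconv : f (x₀ + l • w) ≤ (((1 - l) * F₀ + l * F : ℝ) : EReal) := by
      have := hcvx x₀ x (1 - l) l (by linarith) hl₀.le (by ring)
      rwa [← hF, ← hF₀, show (1 - l) • x₀ + l • x = x₀ + l • w by simp only [w]; module]
        at this
    have := (h (x₀ + l • w)).trans (add_le_add_left hconv _)
    norm_cast at this
    nlinarith [hq w l]
  have hlim : Tendsto (fun l => F - F₀ + l * Q w) (𝓝[>] 0) (𝓝 (F - F₀)) := by
    refine tendsto_nhdsWithin_of_tendsto_nhds ?_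
    exact (by fun_prop : Continuous fun l : ℝ => F - F₀ + l * Q w).tendsto' 0 _ (by simp)
  linarith [ge_of_tendsto hlim (Filter.mem_of_superset (Ioo_mem_nhdsGT one_pos) hslope)]

theorem isClosed_setOf_isSubgradAt (hf : LowerSemicontinuous f) :
    IsClosed {p : E × E | IsSubgradAt f p.1 p.2} := by
  simp only [IsSubgradAt, Set.ofPred_forall]
  refine isClosed_iInter fun u => ?_
  have hF : LowerSemicontinuous fun p : E × E => f p.2 + ((⟪p.1, u - p.2⟫ : ℝ) : EReal) :=
    (hf.comp continuous_snd).add'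
      (continuous_coe_real_ereal.comp (by fun_prop)).lowerSemicontinuous
      fun _ => EReal.continuousAt_add (Or.inr (EReal.coe_ne_bot _)) (Or.inr (EReal.coe_ne_top _))
  exact hF.isClosed_preimage (f u)

theorem IsSubgradAt.of_tendsto (hf : LowerSemicontinuous f) {ι : Type*} {l : Filter ι} [l.NeBot]
    {u w : ι → E} {v x : E} (hu : Tendsto u l (𝓝 v)) (hw : Tendsto w l (𝓝 x))
    (hsub : ∀ k, IsSubgradAt f (u k) (w k)) : IsSubgradAt f v x :=
  (isClosed_setOf_isSubgradAt hf).mem_of_tendsto (hu.prodMk_nhds hw) (Eventually.of_forall hsub)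

end Subgradient

section Quadratic

variable {E : Type*} [NormedAddCommGroup E] [InnerProductSpace ℝ E]

theorem exists_pos_mul_sq_norm_le [FiniteDimensional ℝ E] {q : E → ℝ} (hcont : Continuous q)
    (hhom : ∀ (r : ℝ) (w : E), q (r • w) = r ^ 2 * q w) (hpos : ∀ w, w ≠ 0 → 0 < q w) :
    ∃ ρ > 0, ∀ w, ρ * ‖w‖ ^ 2 ≤ q w := by
  have hq0 : q 0 = 0 := by simpa using hhom 0 0
  rcases subsingleton_or_nontrivial E with hE | hE
  · exact ⟨1, one_pos, fun w => by simp [Subsingleton.elim w 0, hq0]⟩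
  obtain ⟨u, hu, hmin⟩ := (isCompact_sphere (0 : E) 1).exists_isMinOn
    (Set.nonempty_coe_sort.1 (NormedSpace.sphere_nonempty_rclike ℝ zero_le_one))
    hcont.continuousOn
  have hu0 : u ≠ 0 := ne_zero_of_mem_unit_sphere ⟨u, hu⟩
  refine ⟨q u, hpos u hu0, fun w => ?_⟩
  obtain rfl | hw := eq_or_ne w 0
  · simp [hq0]
  have hn : ‖w‖ ≠ 0 := norm_ne_zero_iff.2 hw
  have := hmin (show ‖w‖⁻¹ • w ∈ Metric.sphere (0 : E) 1 by simp [norm_smul, hn])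
  rw [Set.mem_ofPred_eq, hhom] at this
  calc q u * ‖w‖ ^ 2 ≤ ‖w‖⁻¹ ^ 2 * q w * ‖w‖ ^ 2 := by gcongr
    _ = q w := by field_simp

theorem sq_norm_apply_le_opNorm_mul_inner {T : E →L[ℝ] E} (hsym : ∀ u v, ⟪T u, v⟫ = ⟪u, T v⟫)
    (hpsd : ∀ w, 0 ≤ ⟪w, T w⟫) (w : E) : ‖T w‖ ^ 2 ≤ ‖T‖ * ⟪w, T w⟫ := by
  obtain hT | hT := eq_or_ne ‖T‖ 0
  · simp [norm_eq_zero.1 hT]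
  have h := hpsd (w - ‖T‖⁻¹ • T w)
  have hTT : ⟪T w, T (T w)⟫ ≤ ‖T‖ * ‖T w‖ ^ 2 := by
    calc ⟪T w, T (T w)⟫ ≤ ‖T w‖ * (‖T‖ * ‖T w‖) :=
          (real_inner_le_norm _ _).trans (by gcongr; exact T.le_opNorm _)
      _ = ‖T‖ * ‖T w‖ ^ 2 := by ring
  simp only [map_sub, map_smul, inner_sub_left, inner_sub_right, real_inner_smul_left,
    real_inner_smul_right, ← hsym w (T w), real_inner_self_eq_norm_sq] at h
  have hpos : 0 < ‖T‖ := (norm_nonneg T).lt_of_ne' hT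
  have hTT' : ‖T‖⁻¹ * ⟪T w, T (T w)⟫ ≤ ‖T w‖ ^ 2 := (inv_mul_le_iff₀ hpos).2 hTT
  have hs : ‖T‖⁻¹ * ‖T w‖ ^ 2 ≤ ⟪w, T w⟫ := by nlinarith [inv_pos.2 hpos]
  rwa [inv_mul_le_iff₀ hpos] at hs

theorem two_mul_inner_apply_sub {T : E →L[ℝ] E} (hsym : ∀ u v, ⟪T u, v⟫ = ⟪u, T v⟫) (a b : E) :
    2 * ⟪T (a - b), a⟫ = ⟪a, T a⟫ - ⟪b, T b⟫ + ⟪a - b, T (a - b)⟫ := by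
  simp only [map_sub, inner_sub_left, inner_sub_right, hsym]
  rw [real_inner_comm (T a) b, hsym]
  ring

end Quadratic

/-- The form in `a = A (x - x̄)`, `b = B (y - ȳ)` that the descent estimate of the proximal AMA
leaves over; the step-size condition makes it positive definite. -/
theorem exists_pos_sq_norm_le_of_stepsize {Z : Type*} [NormedAddCommGroup Z]
    [InnerProductSpace ℝ Z] {β μ γ : ℝ} (hβ : 0 < β) (hμ : 0 < μ)
    (hγ : γ < 1 + min β μ / (2 * β)) :
    ∃ η > 0, ∀ a b : Z, η * ‖b‖ ^ 2 ≤
      (β + μ - γ * β) * ‖a‖ ^ 2 + β * (2 - γ) * ‖b‖ ^ 2 + 2 * (β * (1 - γ)) * ⟪a, b⟫ := by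
  have hm : 2 * β * (γ - 1) < min β μ := by
    have := (lt_div_iff₀ (by positivity : 0 < 2 * β)).1 (by linarith : γ - 1 < min β μ / (2 * β))
    linarith
  have hmβ := min_le_left β μ
  have hmμ := min_le_right β μ
  have hl : 0 < β + μ - γ * β := by nlinarith
  have hdet : 0 < β * (1 - γ) + μ * (2 - γ) := by nlinarith
  refine ⟨β * (2 - γ) - (β * (1 - γ)) ^ 2 / (β + μ - γ * β), ?_, fun a b => ?_⟩
  · change 0 < _
    rw [sub_pos, div_lt_iff₀ hl]
    nlinarith
  -- complete the square in `a`
  have hsq := sq_nonneg ‖(β + μ - γ * β) • a + (β * (1 - γ)) • b‖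
  rw [norm_add_sq_real, norm_smul, norm_smul, inner_smul_left, inner_smul_right] at hsq
  simp only [Real.norm_eq_abs, mul_pow, sq_abs, conj_trivial] at hsq
  rw [sub_mul, div_mul_eq_mul_div, sub_le_iff_le_add, ← sub_le_iff_le_add', le_div_iff₀ hl]
  nlinarith

theorem tendsto_zero_of_add_le_of_nonneg {Φ D : ℕ → ℝ} (h : ∀ t, Φ (t + 1) + D t ≤ Φ t)
    (hΦ : ∀ t, 0 ≤ Φ t) (hD : ∀ t, 0 ≤ D t) : Tendsto D atTop (𝓝 0) := by
  have hanti : Antitone Φ := antitone_nat_of_succ_le fun t => by linarith [h t, hD t]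
  have hlim := tendsto_atTop_ciInf hanti ⟨0, by rintro _ ⟨t, rfl⟩; exact hΦ t⟩
  have hdiff : Tendsto (fun t => Φ t - Φ (t + 1)) atTop (𝓝 0) := by
    simpa using hlim.sub ((tendsto_add_atTop_iff_nat 1).2 hlim)
  exact squeeze_zero hD (fun t => by linarith [h t]) hdiff

theorem tendsto_zero_of_mul_le {F D : ℕ → ℝ} {κ : ℝ} (hκ : 0 < κ) (hF : ∀ t, 0 ≤ F t)
    (hle : ∀ t, κ * F t ≤ D t) (hD : Tendsto D atTop (𝓝 0)) : Tendsto F atTop (𝓝 0) :=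
  squeeze_zero hF (fun t => (le_div_iff₀' hκ).2 (hle t)) (by simpa using hD.div_const κ)

theorem tendsto_of_sq_norm_sub_tendsto_zero {E : Type*} [NormedAddCommGroup E] {u : ℕ → E}
    {a : E}
    (h : Tendsto (fun t => ‖u t - a‖ ^ 2) atTop (𝓝 0)) : Tendsto u atTop (𝓝 a) := by
  rw [tendsto_iff_norm_sub_tendsto_zero]
  simpa [Real.sqrt_sq (norm_nonneg _)] using h.sqrt

theorem isBounded_range_of_sq_norm_sub_le {E : Type*} [NormedAddCommGroup E] {u : ℕ → E}
    (a : E) {C : ℝ} (h : ∀ t, ‖u t - a‖ ^ 2 ≤ C) : Bornology.IsBounded (Set.range u) :=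
  (Metric.isBounded_closedBall (x := a) (r := √C)).subset <| Set.range_subset_iff.2 fun t => by
    rw [Metric.mem_closedBall, dist_eq_norm]
    simpa using Real.abs_le_sqrt (h t)

section ProxAMALyapunov

variable {X Y Z : Type*} [NormedAddCommGroup X]
  [NormedAddCommGroup Y] [InnerProductSpace ℝ Y] [NormedAddCommGroup Z] [InnerProductSpace ℝ Z]
  {B : Y →L[ℝ] Z} {c : Z}
  {Sg T : Y →L[ℝ] Y} {β γ ε η ρ : ℝ} {x : ℕ → X} {y : ℕ → Y} {z : ℕ → Z}
  {xk : X} {yk : Y} {zk : Z}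

variable (T β γ y z) in
def proxAMALyapunov (yk : Y) (zk : Z) (t : ℕ) : ℝ :=
  ‖z t - zk‖ ^ 2 + γ * β * ⟪y t - yk, T (y t - yk)⟫

theorem proxAMA_lyapunov_antitone_and_tendsto (hSg_psd : ∀ w, 0 ≤ ⟪w, Sg w⟫)
    (hT_psd : ∀ w, 0 ≤ ⟪w, T w⟫)
    (hε : 0 < ε) (hη : 0 < η) (hγβ : 0 < γ * β)
    (hdesc : ∀ t, proxAMALyapunov T β γ y z yk zk (t + 1)
      + γ * β * (ε * ‖x (t + 1) - xk‖ ^ 2 + 2 * ⟪y (t + 1) - yk, Sg (y (t + 1) - yk)⟫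
        + ⟪y (t + 1) - y t, T (y (t + 1) - y t)⟫ + η * ‖B (y (t + 1) - yk)‖ ^ 2)
      ≤ proxAMALyapunov T β γ y z yk zk t) :
    Antitone (proxAMALyapunov T β γ y z yk zk) ∧
      Tendsto (fun t => x (t + 1)) atTop (𝓝 xk) ∧
      Tendsto (fun t => ⟪y (t + 1) - yk, Sg (y (t + 1) - yk)⟫) atTop (𝓝 0) ∧
      Tendsto (fun t => ⟪y (t + 1) - y t, T (y (t + 1) - y t)⟫) atTop (𝓝 0) ∧
      Tendsto (fun t => B (y (t + 1) - yk)) atTop (𝓝 0) := by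
  have hx := fun t => mul_nonneg hε.le (sq_nonneg ‖x (t + 1) - xk‖)
  have hSg := fun t => hSg_psd (y (t + 1) - yk)
  have hT := fun t => hT_psd (y (t + 1) - y t)
  have hB := fun t => mul_nonneg hη.le (sq_nonneg ‖B (y (t + 1) - yk)‖)
  have hdiss := tendsto_zero_of_add_le_of_nonneg hdesc
    (fun t => add_nonneg (sq_nonneg _) (mul_nonneg hγβ.le (hT_psd _)))
    (fun t => mul_nonneg hγβ.le (by linarith [hx t, hSg t, hT t, hB t]))
  refine ⟨antitone_nat_of_succ_le fun t => ?_, ?_, ?_, ?_, ?_⟩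
  · nlinarith [hdesc t, hx t, hSg t, hT t, hB t]
  · refine tendsto_of_sq_norm_sub_tendsto_zero (tendsto_zero_of_mul_le (mul_pos hγβ hε)
      (fun t => sq_nonneg _) (fun t => ?_) hdiss)
    nlinarith [hx t, hSg t, hT t, hB t]
  · refine tendsto_zero_of_mul_le (mul_pos hγβ two_pos) hSg (fun t => ?_) hdiss
    nlinarith [hx t, hSg t, hT t, hB t]
  · refine tendsto_zero_of_mul_le hγβ hT (fun t => ?_) hdiss
    nlinarith [hx t, hSg t, hT t, hB t]
  · have hB0 := tendsto_zero_of_mul_le (mul_pos hγβ hη)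
      (fun t => sq_nonneg ‖B (y (t + 1) - yk) - 0‖) (fun t => ?_) hdiss
    · exact tendsto_of_sq_norm_sub_tendsto_zero hB0
    · rw [sub_zero]
      nlinarith [hx t, hSg t, hT t, hB t]

theorem proxAMA_isBounded_range (hT_psd : ∀ w, 0 ≤ ⟪w, T w⟫) (hβ : 0 ≤ β) (hγβ : 0 < γ * β)
    (hρ : 0 < ρ) (hcoer : ∀ w, ρ * ‖w‖ ^ 2 ≤ ⟪w, Sg w⟫ + ⟪w, T w⟫ + β * ‖B w‖ ^ 2)
    (hanti : Antitone (proxAMALyapunov T β γ y z yk zk))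
    (hSg : Tendsto (fun t => ⟪y (t + 1) - yk, Sg (y (t + 1) - yk)⟫) atTop (𝓝 0))
    (hB : Tendsto (fun t => B (y (t + 1) - yk)) atTop (𝓝 0)) :
    Bornology.IsBounded (Set.range fun t => (y (t + 1), z t)) := by
  obtain ⟨M₁, hM₁⟩ := hSg.bddAbove_range
  obtain ⟨M₂, hM₂⟩ := (hB.norm.pow 2).bddAbove_range
  have hΦ t : ‖z t - zk‖ ^ 2 + γ * β * ⟪y t - yk, T (y t - yk)⟫
      ≤ proxAMALyapunov T β γ y z yk zk 0 := hanti (Nat.zero_le t)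
  set Φ₀ := proxAMALyapunov T β γ y z yk zk 0
  refine ((isBounded_range_of_sq_norm_sub_le yk (C := (M₁ + Φ₀ / (γ * β) + β * M₂) / ρ)
    fun t => ?_).prod (isBounded_range_of_sq_norm_sub_le zk (C := Φ₀) fun t => ?_)).subset
    (Set.range_pair_subset _ _)
  · have h₁ : ⟪y (t + 1) - yk, Sg (y (t + 1) - yk)⟫ ≤ M₁ := hM₁ (Set.mem_range_self t)
    have h₂ : ‖B (y (t + 1) - yk)‖ ^ 2 ≤ M₂ := hM₂ (Set.mem_range_self t)
    have h₃ : ⟪y (t + 1) - yk, T (y (t + 1) - yk)⟫ ≤ Φ₀ / (γ * β) := by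
      rw [le_div_iff₀' hγβ]
      linarith [hΦ (t + 1), sq_nonneg ‖z (t + 1) - zk‖]
    rw [le_div_iff₀' hρ]
    nlinarith [hcoer (y (t + 1) - yk)]
  · linarith [hΦ t, mul_nonneg hγβ.le (hT_psd (y t - yk))]

theorem proxAMA_residual_tendsto_zero [NormedSpace ℝ X] {A : X →L[ℝ] Z}
    (hfeas : A xk + B yk - c = 0)
    (hx : Tendsto (fun t => x (t + 1)) atTop (𝓝 xk))
    (hB : Tendsto (fun t => B (y (t + 1) - yk)) atTop (𝓝 0)) :
    Tendsto (fun t => A (x (t + 1)) + B (y (t + 1)) - c) atTop (𝓝 0) := by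
  have hA : Tendsto (fun t => A (x (t + 1) - xk)) atTop (𝓝 0) :=
    map_zero A ▸ (A.continuous.tendsto 0).comp (tendsto_sub_nhds_zero_iff.2 hx)
  rw [← add_zero (0 : Z)]
  refine (hA.add hB).congr fun t => ?_
  simp only [map_sub, ← sub_eq_zero.1 hfeas]
  abel

theorem proxAMA_tendsto_of_subseq [NormedSpace ℝ X] {A : X →L[ℝ] Z}
    (hz : ∀ t : ℕ, z (t+1) = z t - (γ * β) • (A (x (t+1)) + B (y (t+1)) - c))
    (hT_psd : ∀ w, 0 ≤ ⟪w, T w⟫) (hγβ : 0 < γ * β)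
    (hρ : 0 < ρ) (hcoer : ∀ w, ρ * ‖w‖ ^ 2 ≤ ⟪w, Sg w⟫ + ⟪w, T w⟫ + β * ‖B w‖ ^ 2)
    {yo : Y} {zo : Z} (hanti : Antitone (proxAMALyapunov T β γ y z yo zo))
    (hSg : Tendsto (fun t => ⟪y (t + 1) - yo, Sg (y (t + 1) - yo)⟫) atTop (𝓝 0))
    (hB : Tendsto (fun t => B (y (t + 1) - yo)) atTop (𝓝 0))
    (hres : Tendsto (fun t => A (x (t + 1)) + B (y (t + 1)) - c) atTop (𝓝 0))
    {φ : ℕ → ℕ} (hφ : Tendsto φ atTop atTop)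
    (hyφ : Tendsto (fun k => y (φ k + 1)) atTop (𝓝 yo))
    (hzφ : Tendsto (fun k => z (φ k)) atTop (𝓝 zo)) :
    Tendsto z atTop (𝓝 zo) ∧ Tendsto y atTop (𝓝 yo) := by
  have hz₁ : Tendsto (fun k => z (φ k + 1) - zo) atTop (𝓝 0) := by
    simpa [hz] using (hzφ.sub ((hres.comp hφ).const_smul (γ * β))).sub_const zo
  have hy₁ : Tendsto (fun k => y (φ k + 1) - yo) atTop (𝓝 0) := by
    simpa using hyφ.sub_const yo
  have hΦφ : Tendsto (fun k => proxAMALyapunov T β γ y z yo zo (φ k + 1)) atTop (𝓝 0) := by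
    simpa [proxAMALyapunov] using (hz₁.norm.pow 2).add
      ((hy₁.inner ((T.continuous.tendsto 0).comp hy₁)).const_mul (γ * β))
  have hΦ : Tendsto (proxAMALyapunov T β γ y z yo zo) atTop (𝓝 0) :=
    (tendsto_iff_tendsto_subseq_of_antitone hanti ((tendsto_add_atTop_nat 1).comp hφ)).2 hΦφ
  have hzΦ t : ‖z t - zo‖ ^ 2 ≤ proxAMALyapunov T β γ y z yo zo t := by
    simp only [proxAMALyapunov]
    linarith [mul_nonneg hγβ.le (hT_psd (y t - yo))]
  have hTΦ t : γ * β * ⟪y t - yo, T (y t - yo)⟫ ≤ proxAMALyapunov T β γ y z yo zo t := by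
    simp only [proxAMALyapunov]
    linarith [sq_nonneg ‖z t - zo‖]
  have hT := tendsto_zero_of_mul_le hγβ (fun t => hT_psd _) hTΦ hΦ
  refine ⟨tendsto_of_sq_norm_sub_tendsto_zero (squeeze_zero (fun _ => sq_nonneg _) hzΦ hΦ),
    (tendsto_add_atTop_iff_nat 1).1 (tendsto_of_sq_norm_sub_tendsto_zero
      (tendsto_zero_of_mul_le hρ (fun _ => sq_nonneg _) (fun t => hcoer _) ?_))⟩
  simpa using (hSg.add (hT.comp (tendsto_add_atTop_nat 1))).add ((hB.norm.pow 2).const_mul β)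

end ProxAMALyapunov

open ContinuousLinearMap (adjoint adjoint_inner_left)

section ProxAMA

variable {X Y Z : Type*}
  [NormedAddCommGroup X] [InnerProductSpace ℝ X] [CompleteSpace X]
  [NormedAddCommGroup Y] [InnerProductSpace ℝ Y] [CompleteSpace Y]
  [NormedAddCommGroup Z] [InnerProductSpace ℝ Z] [CompleteSpace Z]
  {f : X → EReal} {g : Y → EReal} {A : X →L[ℝ] Z} {B : Y →L[ℝ] Z} {c : Z}
  {Sf : X →L[ℝ] X} {Sg T : Y →L[ℝ] Y} {β γ μ ε η : ℝ} {x : ℕ → X} {y : ℕ → Y} {z : ℕ → Z}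
  {xk : X} {yk : Y} {zk : Z}

variable (f g A B c) in
def IsKKTPoint (xk : X) (yk : Y) (zk : Z) : Prop :=
  IsSubgradAt f (adjoint A zk) xk ∧ IsSubgradAt g (adjoint B zk) yk ∧ A xk + B yk - c = 0

theorem IsKKTPoint.le_lagrangian (hk : IsKKTPoint f g A B c xk yk zk) (x' : X) (y' : Y) :
    f xk + g yk ≤ f x' + g y' + ((-⟪zk, A x' + B y' - c⟫ : ℝ) : EReal) := by
  have h := add_le_add (hk.1 x') (hk.2.1 y')
  rw [adjoint_inner_left, adjoint_inner_left] at h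
  have hsum : ⟪zk, A (x' - xk)⟫ + ⟪zk, B (y' - yk)⟫ = ⟪zk, A x' + B y' - c⟫ := by
    rw [← sub_eq_zero.1 hk.2.2, ← inner_add_right]
    congr 1
    simp only [map_sub]
    abel
  calc f xk + g yk
      = f xk + ((⟪zk, A (x' - xk)⟫ : ℝ) : EReal) + (g yk + ((⟪zk, B (y' - yk)⟫ : ℝ) : EReal))
        + ((-⟪zk, A x' + B y' - c⟫ : ℝ) : EReal) := by
        rw [← hsum, add_add_add_comm, add_assoc, ← EReal.coe_add, ← EReal.coe_add, add_neg_cancel,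
          EReal.coe_zero, add_zero]
    _ ≤ f x' + g y' + ((-⟪zk, A x' + B y' - c⟫ : ℝ) : EReal) := by gcongr

theorem IsKKTPoint.le_of_feasible (hk : IsKKTPoint f g A B c xk yk zk) {x' : X} {y' : Y}
    (h : A x' + B y' = c) : f xk + g yk ≤ f x' + g y' := by
  simpa [h] using hk.le_lagrangian x' y'

variable (A B c T β x y z) in
noncomputable def proxAMAYSubgrad (t : ℕ) : Y :=
  adjoint B (z t) - β • adjoint B (A (x (t + 1)) + B (y (t + 1)) - c) - T (y (t + 1) - y t)

theorem proxAMA_isSubgradAt_x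
    (hx : ∀ (t : ℕ) (x' : X),
      f (x (t+1)) + ((-⟪z t, A (x (t+1))⟫ : ℝ) : EReal)
        ≤ f x' + ((-⟪z t, A x'⟫ : ℝ) : EReal)) (t : ℕ) :
    IsSubgradAt f (adjoint A (z t)) (x (t + 1)) :=
  isSubgradAt_of_forall_add_neg_inner_le fun x' => by
    simpa only [adjoint_inner_left] using hx t x'

omit [CompleteSpace X] in
theorem proxAMA_isSubgradAt_y (hg_ne_bot : ∀ y, g y ≠ ⊥)
    (hg_cvx : ∀ (y₁ y₂ : Y) (a b : ℝ), 0 ≤ a → 0 ≤ b → a + b = 1 →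
      g (a • y₁ + b • y₂) ≤ (a : EReal) * g y₁ + (b : EReal) * g y₂)
    (hT_sa : ∀ u v : Y, ⟪T u, v⟫ = ⟪u, T v⟫)
    (hy : ∀ (t : ℕ) (y' : Y),
      g (y (t+1)) + ((-⟪z t, B (y (t+1))⟫ + β / 2 * ‖A (x (t+1)) + B (y (t+1)) - c‖ ^ 2
          + 1 / 2 * ⟪y (t+1) - y t, T (y (t+1) - y t)⟫ : ℝ) : EReal)
        ≤ g y' + ((-⟪z t, B y'⟫ + β / 2 * ‖A (x (t+1)) + B y' - c‖ ^ 2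
          + 1 / 2 * ⟪y' - y t, T (y' - y t)⟫ : ℝ) : EReal)) (t : ℕ) :
    IsSubgradAt g (proxAMAYSubgrad A B c T β x y z t) (y (t + 1)) := by
  refine isSubgradAt_of_forall_add_le hg_ne_bot hg_cvx (q := fun y' => -⟪z t, B y'⟫
    + β / 2 * ‖A (x (t + 1)) + B y' - c‖ ^ 2 + 1 / 2 * ⟪y' - y t, T (y' - y t)⟫)
    (Q := fun w => β / 2 * ‖B w‖ ^ 2 + 1 / 2 * ⟪w, T w⟫) (fun w l => le_of_eq ?_) (hy t)
  have hsym : ⟪w, T (y (t + 1) - y t)⟫ = ⟪y (t + 1) - y t, T w⟫ := by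
    rw [real_inner_comm, hT_sa]
  rw [show A (x (t + 1)) + B (y (t + 1) + l • w) - c = (A (x (t + 1)) + B (y (t + 1)) - c)
      + l • B w by rw [map_add, map_smul]; abel,
    show y (t + 1) + l • w - y t = (y (t + 1) - y t) + l • w by abel, norm_add_sq_real]
  simp only [proxAMAYSubgrad, map_add, map_smul, inner_add_left, inner_add_right, inner_sub_left,
    real_inner_smul_left, real_inner_smul_right, adjoint_inner_left, hT_sa, norm_smul,
    Real.norm_eq_abs, mul_pow, sq_abs] at hsym ⊢
  linear_combination (l / 2) * hsym

theorem proxAMA_descent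
    (hf_mono : ∀ (x₁ x₂ u₁ u₂ : X), IsSubgradAt f u₁ x₁ → IsSubgradAt f u₂ x₂ →
      ⟪x₁ - x₂, Sf (x₁ - x₂)⟫ ≤ ⟪u₁ - u₂, x₁ - x₂⟫)
    (hg_mono : ∀ (y₁ y₂ v₁ v₂ : Y), IsSubgradAt g v₁ y₁ → IsSubgradAt g v₂ y₂ →
      ⟪y₁ - y₂, Sg (y₁ - y₂)⟫ ≤ ⟪v₁ - v₂, y₁ - y₂⟫)
    (hT_sa : ∀ u v : Y, ⟪T u, v⟫ = ⟪u, T v⟫)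
    (hz : ∀ t : ℕ, z (t+1) = z t - (γ * β) • (A (x (t+1)) + B (y (t+1)) - c))
    (hxs : ∀ t, IsSubgradAt f (adjoint A (z t)) (x (t + 1)))
    (hys : ∀ t, IsSubgradAt g (proxAMAYSubgrad A B c T β x y z t) (y (t + 1)))
    (hε : ∀ w, ε * ‖w‖ ^ 2 ≤ 2 * ⟪w, Sf w⟫ - (β + μ) * ‖A w‖ ^ 2)
    (hη : ∀ a b : Z, η * ‖b‖ ^ 2 ≤
      (β + μ - γ * β) * ‖a‖ ^ 2 + β * (2 - γ) * ‖b‖ ^ 2 + 2 * (β * (1 - γ)) * ⟪a, b⟫)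
    (hγβ : 0 ≤ γ * β) (hk : IsKKTPoint f g A B c xk yk zk) (t : ℕ) :
    proxAMALyapunov T β γ y z yk zk (t + 1)
      + γ * β * (ε * ‖x (t + 1) - xk‖ ^ 2 + 2 * ⟪y (t + 1) - yk, Sg (y (t + 1) - yk)⟫
        + ⟪y (t + 1) - y t, T (y (t + 1) - y t)⟫ + η * ‖B (y (t + 1) - yk)‖ ^ 2)
      ≤ proxAMALyapunov T β γ y z yk zk t := by
  have hr : A (x (t + 1)) + B (y (t + 1)) - c = A (x (t + 1) - xk) + B (y (t + 1) - yk) := by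
    simp only [map_sub, ← sub_eq_zero.1 hk.2.2]
    abel
  have hf := hf_mono _ _ _ _ (hxs t) hk.1
  rw [← map_sub, adjoint_inner_left] at hf
  have hg := hg_mono _ _ _ _ (hys t) hk.2.1
  rw [show ⟪proxAMAYSubgrad A B c T β x y z t - adjoint B zk, y (t + 1) - yk⟫
      = ⟪z t - zk, B (y (t + 1) - yk)⟫
        - β * (⟪A (x (t + 1) - xk), B (y (t + 1) - yk)⟫ + ‖B (y (t + 1) - yk)‖ ^ 2)
        - ⟪T (y (t + 1) - y t), y (t + 1) - yk⟫ by
    simp only [proxAMAYSubgrad, hr, inner_sub_left, real_inner_smul_left, adjoint_inner_left,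
      inner_add_left, real_inner_self_eq_norm_sq]
    ring] at hg
  set a := A (x (t + 1) - xk)
  set b := B (y (t + 1) - yk)
  set ζ := z t - zk
  have hTd := two_mul_inner_apply_sub hT_sa (y (t + 1) - yk) (y t - yk)
  rw [sub_sub_sub_cancel_right] at hTd
  have hzn : ‖z (t + 1) - zk‖ ^ 2
      = ‖ζ‖ ^ 2 - 2 * (γ * β) * (⟪ζ, a⟫ + ⟪ζ, b⟫)
        + (γ * β) ^ 2 * (‖a‖ ^ 2 + 2 * ⟪a, b⟫ + ‖b‖ ^ 2) := by
    rw [hz, hr, sub_right_comm, norm_sub_sq_real, norm_smul, inner_smul_right, inner_add_right,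
      mul_pow, norm_add_sq_real, Real.norm_eq_abs, sq_abs]
    ring
  have h1 := mul_le_mul_of_nonneg_left (hf.trans' (by linarith [hε (x (t + 1) - xk)] :
    (ε * ‖x (t + 1) - xk‖ ^ 2 + (β + μ) * ‖a‖ ^ 2) / 2 ≤ _)) hγβ
  have h2 := mul_le_mul_of_nonneg_left hg hγβ
  have h3 := mul_le_mul_of_nonneg_left (hη a b) hγβ
  -- the terms `⟪ζ, a⟫`, `⟪ζ, b⟫` of the multiplier update cancel against those of `h1`, `h2`
  simp only [proxAMALyapunov]
  nlinarith

theorem proxAMA_isKKTPoint_of_subseq (hf_lsc : LowerSemicontinuous f)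
    (hg_lsc : LowerSemicontinuous g) (hT_sa : ∀ u v : Y, ⟪T u, v⟫ = ⟪u, T v⟫)
    (hT_psd : ∀ w, 0 ≤ ⟪w, T w⟫)
    (hxs : ∀ t, IsSubgradAt f (adjoint A (z t)) (x (t + 1)))
    (hys : ∀ t, IsSubgradAt g (proxAMAYSubgrad A B c T β x y z t) (y (t + 1)))
    {xo : X} {yo : Y} {zo : Z} (hx : Tendsto (fun t => x (t + 1)) atTop (𝓝 xo))
    (hres : Tendsto (fun t => A (x (t + 1)) + B (y (t + 1)) - c) atTop (𝓝 0))
    (hTd : Tendsto (fun t => ⟪y (t + 1) - y t, T (y (t + 1) - y t)⟫) atTop (𝓝 0))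
    {φ : ℕ → ℕ} (hφ : Tendsto φ atTop atTop)
    (hyφ : Tendsto (fun k => y (φ k + 1)) atTop (𝓝 yo))
    (hzφ : Tendsto (fun k => z (φ k)) atTop (𝓝 zo)) :
    IsKKTPoint f g A B c xo yo zo := by
  have hTd' : Tendsto (fun t => T (y (t + 1) - y t)) atTop (𝓝 0) :=
    tendsto_of_sq_norm_sub_tendsto_zero (squeeze_zero (fun _ => sq_nonneg _)
      (fun t => by simpa only [sub_zero] using
        sq_norm_apply_le_opNorm_mul_inner hT_sa hT_psd (y (t + 1) - y t))
      (by simpa only [mul_zero] using hTd.const_mul ‖T‖))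
  have hv :
      Tendsto (fun k => proxAMAYSubgrad A B c T β x y z (φ k)) atTop (𝓝 (adjoint B zo)) := by
    simpa [proxAMAYSubgrad] using ((((adjoint B).continuous.tendsto zo).comp hzφ).sub
      ((((adjoint B).continuous.tendsto 0).comp (hres.comp hφ)).const_smul β)).sub (hTd'.comp hφ)
  refine ⟨IsSubgradAt.of_tendsto hf_lsc (((adjoint A).continuous.tendsto zo).comp hzφ)
    (hx.comp hφ) fun k => hxs (φ k),
    IsSubgradAt.of_tendsto hg_lsc hv hyφ fun k => hys (φ k), ?_⟩
  refine tendsto_nhds_unique ?_ (hres.comp hφ)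
  exact (((A.continuous.tendsto xo).comp (hx.comp hφ)).add
    ((B.continuous.tendsto yo).comp hyφ)).sub_const c

end ProxAMA

theorem stmt_0_general
    {X Y Z : Type*}
    [NormedAddCommGroup X] [InnerProductSpace ℝ X] [FiniteDimensional ℝ X]
    [NormedAddCommGroup Y] [InnerProductSpace ℝ Y] [FiniteDimensional ℝ Y]
    [NormedAddCommGroup Z] [InnerProductSpace ℝ Z] [FiniteDimensional ℝ Z]
    (f : X → EReal) (g : Y → EReal)
    -- `f` and `g` are proper
    (hg_ne_bot : ∀ y, g y ≠ ⊥)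
    -- `f` and `g` are closed
    (hf_lsc : LowerSemicontinuous f) (hg_lsc : LowerSemicontinuous g)
    -- `f` and `g` are convex
    (hg_cvx : ∀ (y₁ y₂ : Y) (a b : ℝ), 0 ≤ a → 0 ≤ b → a + b = 1 →
      g (a • y₁ + b • y₂) ≤ (a : EReal) * g y₁ + (b : EReal) * g y₂)
    (A : X →L[ℝ] Z) (B : Y →L[ℝ] Z) (c : Z)
    (Sf : X →L[ℝ] X) (Sg : Y →L[ℝ] Y) (T : Y →L[ℝ] Y)
    -- `Sf ≻ 0`, `Sg ⪰ 0`, `T ⪰ 0` are self-adjoint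
    (hT_sa : ∀ u v : Y, ⟪T u, v⟫ = ⟪u, T v⟫)
    (hSg_psd : ∀ y : Y, 0 ≤ ⟪y, Sg y⟫)
    (hT_psd : ∀ y : Y, 0 ≤ ⟪y, T y⟫)
    -- the subdifferential monotonicity conditions on `f` and `g`
    (hf_mono : ∀ (x₁ x₂ u₁ u₂ : X), IsSubgradAt f u₁ x₁ → IsSubgradAt f u₂ x₂ →
      ⟪x₁ - x₂, Sf (x₁ - x₂)⟫ ≤ ⟪u₁ - u₂, x₁ - x₂⟫)
    (hg_mono : ∀ (y₁ y₂ v₁ v₂ : Y), IsSubgradAt g v₁ y₁ → IsSubgradAt g v₂ y₂ →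
      ⟪y₁ - y₂, Sg (y₁ - y₂)⟫ ≤ ⟪v₁ - v₂, y₁ - y₂⟫)
    (β γ : ℝ) (hβ : 0 < β) (hγ : 0 < γ)
    (x : ℕ → X) (y : ℕ → Y) (z : ℕ → Z)
    -- the proximal AMA iterations
    (hx : ∀ (t : ℕ) (x' : X),
      f (x (t+1)) + ((-⟪z t, A (x (t+1))⟫ : ℝ) : EReal)
        ≤ f x' + ((-⟪z t, A x'⟫ : ℝ) : EReal))
    (hy : ∀ (t : ℕ) (y' : Y),
      g (y (t+1)) + ((-⟪z t, B (y (t+1))⟫ + β / 2 * ‖A (x (t+1)) + B (y (t+1)) - c‖ ^ 2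
          + 1 / 2 * ⟪y (t+1) - y t, T (y (t+1) - y t)⟫ : ℝ) : EReal)
        ≤ g y' + ((-⟪z t, B y'⟫ + β / 2 * ‖A (x (t+1)) + B y' - c‖ ^ 2
          + 1 / 2 * ⟪y' - y t, T (y' - y t)⟫ : ℝ) : EReal))
    (hz : ∀ t : ℕ, z (t+1) = z t - (γ * β) • (A (x (t+1)) + B (y (t+1)) - c))
    -- assumption A1
    (hA1 : ∃ (xb : X) (yb : Y) (zb : Z),
      IsSubgradAt f (ContinuousLinearMap.adjoint A zb) xb ∧
      IsSubgradAt g (ContinuousLinearMap.adjoint B zb) yb ∧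
      A xb + B yb - c = 0)
    -- condition (i): `Sg + T + βB*B ≻ 0`
    (hcond1 : ∀ w : Y, w ≠ 0 → 0 < ⟪w, Sg w⟫ + ⟪w, T w⟫ + β * ‖B w‖ ^ 2)
    -- condition (ii): for some `μ > 0`, `2Sf − (β+μ)A*A ≻ 0` and `γ < 1 + min{β,μ}/(2β)`
    (hcond2 : ∃ μ : ℝ, 0 < μ ∧
      (∀ w : X, w ≠ 0 → 0 < 2 * ⟪w, Sf w⟫ - (β + μ) * ‖A w‖ ^ 2) ∧
      γ < 1 + min β μ / (2 * β)) :
    ∃ (xd : X) (yd : Y) (zd : Z),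
      Tendsto x atTop (𝓝 xd) ∧ Tendsto y atTop (𝓝 yd) ∧ Tendsto z atTop (𝓝 zd) ∧
      IsSubgradAt f (ContinuousLinearMap.adjoint A zd) xd ∧
      IsSubgradAt g (ContinuousLinearMap.adjoint B zd) yd ∧
      A xd + B yd - c = 0 ∧
      -- `(x⋄, y⋄)` is an optimal solution of the primal problem
      (∀ (x' : X) (y' : Y), A x' + B y' = c → f xd + g yd ≤ f x' + g y') ∧
      -- `z⋄` is an optimal solution of the dual problem (a Lagrange multiplier)
      (∀ (x' : X) (y' : Y),
        f xd + g yd ≤ f x' + g y' + ((-⟪zd, A x' + B y' - c⟫ : ℝ) : EReal)) := by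
  obtain ⟨xb, yb, zb, hb⟩ := hA1
  obtain ⟨μ, hμ, hSfA, hγμ⟩ := hcond2
  obtain ⟨ε, hε, hSfA'⟩ := exists_pos_mul_sq_norm_le (by fun_prop)
    (fun r w => by simp only [map_smul, real_inner_smul_left, real_inner_smul_right, norm_smul,
      Real.norm_eq_abs, mul_pow, sq_abs]; ring) hSfA
  obtain ⟨ρ, hρ, hcoer⟩ := exists_pos_mul_sq_norm_le (by fun_prop)
    (fun r w => by simp only [map_smul, real_inner_smul_left, real_inner_smul_right, norm_smul,
      Real.norm_eq_abs, mul_pow, sq_abs]; ring) hcond1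
  obtain ⟨η, hη, hquad⟩ := exists_pos_sq_norm_le_of_stepsize (Z := Z) hβ hμ hγμ
  have hγβ := mul_pos hγ hβ
  have hxs := proxAMA_isSubgradAt_x hx
  have hys := proxAMA_isSubgradAt_y hg_ne_bot hg_cvx hT_sa hy
  have hfejer {xk yk zk} (hk : IsKKTPoint f g A B c xk yk zk) :=
    proxAMA_lyapunov_antitone_and_tendsto hSg_psd hT_psd hε hη hγβ
      (proxAMA_descent hf_mono hg_mono hT_sa hz hxs hys hSfA' hquad hγβ.le hk)
  obtain ⟨hanti, hxlim, hSg, hTd, hB⟩ := hfejer hb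
  have hres := proxAMA_residual_tendsto_zero hb.2.2 hxlim hB
  obtain ⟨⟨yo, zo⟩, -, φ, hφ, hlim⟩ := tendsto_subseq_of_bounded
    (proxAMA_isBounded_range hT_psd hβ.le hγβ hρ hcoer hanti hSg hB) fun t => Set.mem_range_self t
  have hyφ := (continuous_fst.tendsto _).comp hlim
  have hzφ := (continuous_snd.tendsto _).comp hlim
  have ho := proxAMA_isKKTPoint_of_subseq hf_lsc hg_lsc hT_sa hT_psd hxs hys hxlim hres hTd
    hφ.tendsto_atTop hyφ hzφ
  obtain ⟨hanti', -, hSg', -, hB'⟩ := hfejer ho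
  obtain ⟨hzlim, hylim⟩ := proxAMA_tendsto_of_subseq hz hT_psd hγβ hρ hcoer hanti' hSg' hB'
    hres hφ.tendsto_atTop hyφ hzφ
  exact ⟨xb, yo, zo, (tendsto_add_atTop_iff_nat 1).1 hxlim, hylim, hzlim, ho.1, ho.2.1, ho.2.2,
    fun _ _ h => ho.le_of_feasible h, ho.le_lagrangian⟩

/-- **Convergence of the proximal AMA (Theorem 3.1).**
Under assumption A1 and the parameter conditions (i), (ii), the iterates
`(xₜ, yₜ, zₜ)` of the proximal AMA converge to a limit `(x⋄, y⋄, z⋄)` with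
`A*z⋄ ∈ ∂f(x⋄)`, `B*z⋄ ∈ ∂g(y⋄)`, `Ax⋄ + By⋄ = c`; in particular `(x⋄, y⋄)`
is primal optimal and `z⋄` is dual optimal (a Lagrange multiplier). -/
theorem stmt_0
    {X Y Z : Type*}
    [NormedAddCommGroup X] [InnerProductSpace ℝ X] [FiniteDimensional ℝ X]
    [NormedAddCommGroup Y] [InnerProductSpace ℝ Y] [FiniteDimensional ℝ Y]
    [NormedAddCommGroup Z] [InnerProductSpace ℝ Z] [FiniteDimensional ℝ Z]
    (f : X → EReal) (g : Y → EReal)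
    -- `f` and `g` are proper
    (hf_ne_bot : ∀ x, f x ≠ ⊥) (hf_proper : ∃ x, f x ≠ ⊤)
    (hg_ne_bot : ∀ y, g y ≠ ⊥) (hg_proper : ∃ y, g y ≠ ⊤)
    -- `f` and `g` are closed
    (hf_lsc : LowerSemicontinuous f) (hg_lsc : LowerSemicontinuous g)
    -- `f` and `g` are convex
    (hf_cvx : ∀ (x₁ x₂ : X) (a b : ℝ), 0 ≤ a → 0 ≤ b → a + b = 1 →
      f (a • x₁ + b • x₂) ≤ (a : EReal) * f x₁ + (b : EReal) * f x₂)
    (hg_cvx : ∀ (y₁ y₂ : Y) (a b : ℝ), 0 ≤ a → 0 ≤ b → a + b = 1 →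
      g (a • y₁ + b • y₂) ≤ (a : EReal) * g y₁ + (b : EReal) * g y₂)
    (A : X →L[ℝ] Z) (B : Y →L[ℝ] Z) (c : Z)
    (Sf : X →L[ℝ] X) (Sg : Y →L[ℝ] Y) (T : Y →L[ℝ] Y)
    -- `Sf ≻ 0`, `Sg ⪰ 0`, `T ⪰ 0` are self-adjoint
    (hSf_sa : ∀ u v : X, ⟪Sf u, v⟫ = ⟪u, Sf v⟫)
    (hSg_sa : ∀ u v : Y, ⟪Sg u, v⟫ = ⟪u, Sg v⟫)
    (hT_sa : ∀ u v : Y, ⟪T u, v⟫ = ⟪u, T v⟫)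
    (hSf_pd : ∀ x : X, x ≠ 0 → 0 < ⟪x, Sf x⟫)
    (hSg_psd : ∀ y : Y, 0 ≤ ⟪y, Sg y⟫)
    (hT_psd : ∀ y : Y, 0 ≤ ⟪y, T y⟫)
    -- the subdifferential monotonicity conditions on `f` and `g`
    (hf_mono : ∀ (x₁ x₂ u₁ u₂ : X), IsSubgradAt f u₁ x₁ → IsSubgradAt f u₂ x₂ →
      ⟪x₁ - x₂, Sf (x₁ - x₂)⟫ ≤ ⟪u₁ - u₂, x₁ - x₂⟫)
    (hg_mono : ∀ (y₁ y₂ v₁ v₂ : Y), IsSubgradAt g v₁ y₁ → IsSubgradAt g v₂ y₂ →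
      ⟪y₁ - y₂, Sg (y₁ - y₂)⟫ ≤ ⟪v₁ - v₂, y₁ - y₂⟫)
    (β γ : ℝ) (hβ : 0 < β) (hγ : 0 < γ)
    (x : ℕ → X) (y : ℕ → Y) (z : ℕ → Z)
    -- the proximal AMA iterations
    (hx : ∀ (t : ℕ) (x' : X),
      f (x (t+1)) + ((-⟪z t, A (x (t+1))⟫ : ℝ) : EReal)
        ≤ f x' + ((-⟪z t, A x'⟫ : ℝ) : EReal))
    (hy : ∀ (t : ℕ) (y' : Y),
      g (y (t+1)) + ((-⟪z t, B (y (t+1))⟫ + β / 2 * ‖A (x (t+1)) + B (y (t+1)) - c‖ ^ 2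
          + 1 / 2 * ⟪y (t+1) - y t, T (y (t+1) - y t)⟫ : ℝ) : EReal)
        ≤ g y' + ((-⟪z t, B y'⟫ + β / 2 * ‖A (x (t+1)) + B y' - c‖ ^ 2
          + 1 / 2 * ⟪y' - y t, T (y' - y t)⟫ : ℝ) : EReal))
    (hz : ∀ t : ℕ, z (t+1) = z t - (γ * β) • (A (x (t+1)) + B (y (t+1)) - c))
    -- assumption A1
    (hA1 : ∃ (xb : X) (yb : Y) (zb : Z),
      IsSubgradAt f (ContinuousLinearMap.adjoint A zb) xb ∧
      IsSubgradAt g (ContinuousLinearMap.adjoint B zb) yb ∧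
      A xb + B yb - c = 0)
    -- condition (i): `Sg + T + βB*B ≻ 0`
    (hcond1 : ∀ w : Y, w ≠ 0 → 0 < ⟪w, Sg w⟫ + ⟪w, T w⟫ + β * ‖B w‖ ^ 2)
    -- condition (ii): for some `μ > 0`, `2Sf − (β+μ)A*A ≻ 0` and `γ < 1 + min{β,μ}/(2β)`
    (hcond2 : ∃ μ : ℝ, 0 < μ ∧
      (∀ w : X, w ≠ 0 → 0 < 2 * ⟪w, Sf w⟫ - (β + μ) * ‖A w‖ ^ 2) ∧
      γ < 1 + min β μ / (2 * β)) :
    ∃ (xd : X) (yd : Y) (zd : Z),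
      Tendsto x atTop (𝓝 xd) ∧ Tendsto y atTop (𝓝 yd) ∧ Tendsto z atTop (𝓝 zd) ∧
      IsSubgradAt f (ContinuousLinearMap.adjoint A zd) xd ∧
      IsSubgradAt g (ContinuousLinearMap.adjoint B zd) yd ∧
      A xd + B yd - c = 0 ∧
      -- `(x⋄, y⋄)` is an optimal solution of the primal problem
      (∀ (x' : X) (y' : Y), A x' + B y' = c → f xd + g yd ≤ f x' + g y') ∧
      -- `z⋄` is an optimal solution of the dual problem (a Lagrange multiplier)
      (∀ (x' : X) (y' : Y),
        f xd + g yd ≤ f x' + g y' + ((-⟪zd, A x' + B y' - c⟫ : ℝ) : EReal)) :=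
  stmt_0_general f g hg_ne_bot hf_lsc hg_lsc hg_cvx A B c Sf Sg T hT_sa hSg_psd hT_psd hf_mono
    hg_mono β γ hβ hγ x y z hx hy hz hA1 hcond1 hcond2
end

section
/- Let {(x^t, y^t, z^t)} be generated by the proximal AMA, suppose assumption A1 holds, and suppose β>0, T ⪰ 0 and γ>0 are chosen so that (i) Σ_g + T + βB*B ≻ 0 and (ii) for some positive μ, δ, σ one has 2Σ_f − (β+μ)A*A ⪰ δI and γ + σ ≤ 1 + min{β,μ}/(2β). Let (x̄, ȳ, z̄) be the limit of {(x^t, y^t, z^t)} and define (x̄^N, ȳ^N) = (1/N)Σ_{t=1}^N (x^t, y^t). Then ‖A x̄^N + B ȳ^N − c‖ ≤ (1/√(Nσβ)) · √((1/(γβ))‖z⁰ − z̄‖² + ‖y⁰ − ȳ‖²_T). -/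
open RealInnerProductSpace Filter Topology

theorem nonpos_of_forall_le_mul {a C : ℝ} (h : ∀ s : ℝ, 0 < s → s ≤ 1 → a ≤ s * C) :
    a ≤ 0 := by
  have hlim : Tendsto (fun s : ℝ => s * C) (𝓝[>] 0) (𝓝 0) := by
    simpa using (tendsto_id.mul_const C).mono_left (nhdsWithin_le_nhds (a := (0 : ℝ)))
  refine ge_of_tendsto hlim ?_
  filter_upwards [Ioo_mem_nhdsGT zero_lt_one] with s hs using h s hs.1 hs.2.le

theorem two_mul_inner_le_mul_add_div {E : Type*} [NormedAddCommGroup E] [InnerProductSpace ℝ E]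
    (u w : E) {a : ℝ} (ha : 0 < a) : 2 * ⟪u, w⟫ ≤ a * ‖u‖ ^ 2 + ‖w‖ ^ 2 / a := by
  have h := norm_sub_sq_real (a • u) w
  rw [norm_smul, real_inner_smul_left, Real.norm_of_nonneg ha.le] at h
  rw [← sub_nonneg]
  have hsq : a * ‖u‖ ^ 2 + ‖w‖ ^ 2 / a - 2 * ⟪u, w⟫ = ‖a • u - w‖ ^ 2 / a := by
    rw [h]; field_simp; ring
  rw [hsq]
  positivity

section Subgradient

variable {E : Type*} [NormedAddCommGroup E] [InnerProductSpace ℝ E]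

theorem isSubgradAt_of_forall_add_neg_inner_le_s3 {f : E → EReal} {w p : E}
    (hmin : ∀ u, f p + ((-⟪w, p⟫ : ℝ) : EReal) ≤ f u + ((-⟪w, u⟫ : ℝ) : EReal)) :
    IsSubgradAt f w p := by
  intro u
  calc f p + ((⟪w, u - p⟫ : ℝ) : EReal)
      = f p + ((-⟪w, p⟫ : ℝ) : EReal) + ((⟪w, u⟫ : ℝ) : EReal) := by
        rw [add_assoc, ← EReal.coe_add, inner_sub_right, neg_add_eq_sub]
    _ ≤ f u + ((-⟪w, u⟫ : ℝ) : EReal) + ((⟪w, u⟫ : ℝ) : EReal) := add_le_add (hmin u) le_rfl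
    _ = f u := by rw [add_assoc, ← EReal.coe_add, neg_add_cancel, EReal.coe_zero, add_zero]

theorem isSubgradAt_neg_of_forall_add_le {g : E → EReal} (hg_ne_bot : ∀ y, g y ≠ ⊥)
    (hg_cvx : ∀ (y₁ y₂ : E) (a b : ℝ), 0 ≤ a → 0 ≤ b → a + b = 1 →
      g (a • y₁ + b • y₂) ≤ (a : EReal) * g y₁ + (b : EReal) * g y₂)
    {q : E → ℝ} {p v : E} (hmin : ∀ u, g p + (q p : EReal) ≤ g u + (q u : EReal))
    (hq : ∀ d, ∃ C, ∀ s, 0 < s → s ≤ 1 → q (p + s • d) ≤ q p + s * ⟪v, d⟫ + s ^ 2 * C) :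
    IsSubgradAt g (-v) p := by
  intro u
  rcases eq_or_ne (g u) ⊤ with hu | hu
  · simp [hu]
  obtain ⟨G, hG⟩ : ∃ G : ℝ, g u = G := ⟨_, (EReal.coe_toReal hu (hg_ne_bot u)).symm⟩
  have hp : g p ≠ ⊤ := fun hp => by simpa [hp, hG, ← EReal.coe_add] using hmin u
  obtain ⟨P, hP⟩ : ∃ P : ℝ, g p = P := ⟨_, (EReal.coe_toReal hp (hg_ne_bot p)).symm⟩
  obtain ⟨C, hC⟩ := hq (u - p)
  have key : ∀ s : ℝ, 0 < s → s ≤ 1 → P - G - ⟪v, u - p⟫ ≤ s * C := by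
    intro s hs hs1
    have hcvx : g (p + s • (u - p)) ≤ (((1 - s) * P + s * G : ℝ) : EReal) := by
      have h := hg_cvx p u (1 - s) s (by linarith) hs.le (by ring)
      rw [hP, hG] at h
      rw [show p + s • (u - p) = (1 - s) • p + s • u by module]
      exact_mod_cast h
    have h := (hmin (p + s • (u - p))).trans (add_le_add_left hcvx _)
    rw [hP] at h
    have h' : P + q p ≤ (1 - s) * P + s * G + q (p + s • (u - p)) := by exact_mod_cast h
    nlinarith [hC s hs hs1]
  have hle := nonpos_of_forall_le_mul key
  rw [hP, hG, inner_neg_left]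
  exact_mod_cast (by linarith : P + -⟪v, u - p⟫ ≤ G)

end Subgradient

section ProximalAMA

variable {X Y Z : Type*}
  [NormedAddCommGroup X] [InnerProductSpace ℝ X]
  [NormedAddCommGroup Y] [InnerProductSpace ℝ Y]
  [NormedAddCommGroup Z] [InnerProductSpace ℝ Z]

open ContinuousLinearMap in
theorem isSubgradAt_of_ySubproblem_minimizer [CompleteSpace Y] [CompleteSpace Z] {g : Y → EReal}
    (hg_ne_bot : ∀ y, g y ≠ ⊥)
    (hg_cvx : ∀ (y₁ y₂ : Y) (a b : ℝ), 0 ≤ a → 0 ≤ b → a + b = 1 →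
      g (a • y₁ + b • y₂) ≤ (a : EReal) * g y₁ + (b : EReal) * g y₂)
    (B : Y →L[ℝ] Z) {T : Y →L[ℝ] Y} (hT_sa : ∀ u v : Y, ⟪T u, v⟫ = ⟪u, T v⟫) (β : ℝ)
    (z w c : Z) (y₀ p : Y)
    (hmin : ∀ y', g p + ((-⟪z, B p⟫ + β / 2 * ‖w + B p - c‖ ^ 2
          + 1 / 2 * ⟪p - y₀, T (p - y₀)⟫ : ℝ) : EReal)
        ≤ g y' + ((-⟪z, B y'⟫ + β / 2 * ‖w + B y' - c‖ ^ 2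
          + 1 / 2 * ⟪y' - y₀, T (y' - y₀)⟫ : ℝ) : EReal)) :
    IsSubgradAt g (adjoint B z - β • adjoint B (w + B p - c) - T (p - y₀)) p := by
  have h := isSubgradAt_neg_of_forall_add_le hg_ne_bot hg_cvx
    (q := fun y' => -⟪z, B y'⟫ + β / 2 * ‖w + B y' - c‖ ^ 2 + 1 / 2 * ⟪y' - y₀, T (y' - y₀)⟫)
    (v := -adjoint B z + β • adjoint B (w + B p - c) + T (p - y₀)) hmin fun d => by
      refine ⟨(β * ‖B d‖ ^ 2 + ⟪d, T d⟫) / 2, fun s _ _ => le_of_eq ?_⟩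
      rw [show w + B (p + s • d) - c = (w + B p - c) + s • B d by rw [map_add, map_smul]; abel,
        show p + s • d - y₀ = (p - y₀) + s • d by abel, norm_add_sq_real, norm_smul,
        Real.norm_eq_abs, mul_pow, sq_abs]
      have hTd : ⟪d, T (p - y₀)⟫ = ⟪p - y₀, T d⟫ := by rw [← hT_sa, real_inner_comm]
      simp only [map_add, map_smul, inner_add_left, inner_add_right, inner_neg_left,
        real_inner_smul_left, real_inner_smul_right, adjoint_inner_left, hTd, ← hT_sa (p - y₀)]
      ring
  convert h using 1
  abel

theorem min_div_two_mul_le_div_add {β μ : ℝ} (hβ : 0 < β) (hμ : 0 < μ) :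
    min β μ / (2 * β) ≤ μ / (β + μ) := by
  rw [div_le_div_iff₀ (by positivity) (by positivity)]
  rcases le_total β μ with h | h
  · rw [min_eq_left h]; nlinarith
  · rw [min_eq_right h]; nlinarith

theorem proxAMA_lyapunov_descent (A : X →L[ℝ] Z) (B : Y →L[ℝ] Z) {Sf : X →L[ℝ] X} {Sg T : Y →L[ℝ] Y}
    (hT_sa : ∀ u v : Y, ⟪T u, v⟫ = ⟪u, T v⟫) (hSg_psd : ∀ y : Y, 0 ≤ ⟪y, Sg y⟫)
    (hT_psd : ∀ y : Y, 0 ≤ ⟪y, T y⟫) {β γ μ σ : ℝ} (hβ : 0 < β) (hγ : 0 < γ) (hμ : 0 < μ)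
    (hσ : γ + σ ≤ 1 + μ / (β + μ)) {dx : X} {dy dy₀ : Y} {e e' r : Z}
    (hSf : (β + μ) * ‖A dx‖ ^ 2 ≤ 2 * ⟪dx, Sf dx⟫)
    (hr : r = A dx + B dy) (he' : e' = e - (γ * β) • r)
    (hf : ⟪dx, Sf dx⟫ ≤ ⟪e, A dx⟫)
    (hg : ⟪dy, Sg dy⟫ ≤ ⟪e, B dy⟫ - β * ⟪r, B dy⟫ - ⟪T (dy - dy₀), dy⟫) :
    σ * β * ‖r‖ ^ 2 ≤ (1 / (γ * β) * ‖e‖ ^ 2 + ⟪dy₀, T dy₀⟫)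
      - (1 / (γ * β) * ‖e'‖ ^ 2 + ⟪dy, T dy⟫) := by
  have he : 1 / (γ * β) * (‖e‖ ^ 2 - ‖e'‖ ^ 2) = 2 * ⟪e, r⟫ - γ * β * ‖r‖ ^ 2 := by
    rw [he', norm_sub_sq_real, real_inner_smul_right, norm_smul, Real.norm_eq_abs, mul_pow,
      sq_abs]
    field_simp
    ring
  have hT : ⟪dy₀, T dy₀⟫
      = ⟪dy, T dy⟫ - 2 * ⟪T (dy - dy₀), dy⟫ + ⟪dy - dy₀, T (dy - dy₀)⟫ := by
    have h₁ : ⟪T dy, dy⟫ = ⟪dy, T dy⟫ := real_inner_comm _ _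
    have h₂ : ⟪T dy₀, dy⟫ = ⟪dy, T dy₀⟫ := real_inner_comm _ _
    simp only [map_sub, inner_sub_left, inner_sub_right, h₁, h₂, ← hT_sa dy₀ dy]
    ring
  have her : ⟪e, r⟫ = ⟪e, A dx⟫ + ⟪e, B dy⟫ := by rw [hr, inner_add_right]
  have hrB : ⟪r, B dy⟫ = ‖r‖ ^ 2 - ⟪r, A dx⟫ := by
    rw [← real_inner_self_eq_norm_sq, ← inner_sub_right, hr, add_sub_cancel_left]
  -- Young's inequality with weight `β / (β + μ)`, so that `(β + μ) ‖A dx‖²` is absorbed by `Sf`.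
  have hyoung := two_mul_inner_le_mul_add_div r (A dx) (a := β / (β + μ)) (by positivity)
  have hw : β * (β / (β + μ)) = β - β * (μ / (β + μ)) := by field_simp; ring
  have hw' : β * (‖A dx‖ ^ 2 / (β / (β + μ))) = (β + μ) * ‖A dx‖ ^ 2 := by field_simp
  nlinarith [hSg_psd dy, hT_psd (dy - dy₀), mul_nonneg (mul_nonneg hβ.le (sq_nonneg ‖r‖))
    (sub_nonneg.2 hσ)]

theorem norm_average_le_of_sq_norm_le_sub (r : ℕ → Z) (Φ : ℕ → ℝ) {κ : ℝ} (hκ : 0 < κ)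
    (hΦ : ∀ t, 0 ≤ Φ t) (hstep : ∀ t, κ * ‖r t‖ ^ 2 ≤ Φ t - Φ (t + 1)) {N : ℕ} (hN : 0 < N) :
    ‖(N : ℝ)⁻¹ • ∑ t ∈ Finset.range N, r t‖ ≤ 1 / √(N * κ) * √(Φ 0) := by
  have hsum : κ * ∑ t ∈ Finset.range N, ‖r t‖ ^ 2 ≤ Φ 0 := by
    have h := Finset.sum_le_sum fun t (_ : t ∈ Finset.range N) => hstep t
    rw [← Finset.mul_sum, Finset.sum_range_sub'] at h
    linarith [hΦ N]
  have hCS : ‖∑ t ∈ Finset.range N, r t‖ ^ 2 ≤ N * ∑ t ∈ Finset.range N, ‖r t‖ ^ 2 := by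
    calc ‖∑ t ∈ Finset.range N, r t‖ ^ 2 ≤ (∑ t ∈ Finset.range N, ‖r t‖) ^ 2 := by
          gcongr; exact norm_sum_le _ _
      _ ≤ N * ∑ t ∈ Finset.range N, ‖r t‖ ^ 2 := by
          simpa using sq_sum_le_card_mul_sum_sq (s := Finset.range N) (f := fun t => ‖r t‖)
  have hN' : (0 : ℝ) < N := by exact_mod_cast hN
  rw [one_div_mul_eq_div, ← Real.sqrt_div' _ (by positivity)]
  apply Real.le_sqrt_of_sq_le
  rw [norm_smul, mul_pow, Real.norm_of_nonneg (by positivity), le_div_iff₀ (by positivity)]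
  calc (N : ℝ)⁻¹ ^ 2 * ‖∑ t ∈ Finset.range N, r t‖ ^ 2 * (N * κ)
      = κ * (‖∑ t ∈ Finset.range N, r t‖ ^ 2 / N) := by field_simp
    _ ≤ κ * ∑ t ∈ Finset.range N, ‖r t‖ ^ 2 := by
      gcongr; rw [div_le_iff₀ hN']; linarith
    _ ≤ Φ 0 := hsum

theorem average_residual_eq (A : X →L[ℝ] Z) (B : Y →L[ℝ] Z) (c : Z) (x : ℕ → X) (y : ℕ → Y)
    {N : ℕ} (hN : 0 < N) :
    A ((N : ℝ)⁻¹ • ∑ t ∈ Finset.Icc 1 N, x t) + B ((N : ℝ)⁻¹ • ∑ t ∈ Finset.Icc 1 N, y t) - c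
      = (N : ℝ)⁻¹ • ∑ t ∈ Finset.range N, (A (x (t + 1)) + B (y (t + 1)) - c) := by
  have hN' : (N : ℝ) ≠ 0 := by exact_mod_cast hN.ne'
  simp only [← Finset.Ico_add_one_right_eq_Icc, Finset.sum_Ico_eq_sum_range,
    Nat.add_sub_cancel, map_smul, map_sum, Finset.sum_sub_distrib, Finset.sum_add_distrib,
    Finset.sum_const, Finset.card_range, smul_sub, smul_add, ← Nat.cast_smul_eq_nsmul ℝ, smul_smul,
    inv_mul_cancel₀ hN', one_smul, add_comm 1]

end ProximalAMA

theorem stmt_3_general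
    {X Y Z : Type*}
    [NormedAddCommGroup X] [InnerProductSpace ℝ X] [FiniteDimensional ℝ X]
    [NormedAddCommGroup Y] [InnerProductSpace ℝ Y] [FiniteDimensional ℝ Y]
    [NormedAddCommGroup Z] [InnerProductSpace ℝ Z] [FiniteDimensional ℝ Z]
    (f : X → EReal) (g : Y → EReal)
    -- `f` and `g` are proper
    (hg_ne_bot : ∀ y, g y ≠ ⊥)
    -- `f` and `g` are convex
    (hg_cvx : ∀ (y₁ y₂ : Y) (a b : ℝ), 0 ≤ a → 0 ≤ b → a + b = 1 →
      g (a • y₁ + b • y₂) ≤ (a : EReal) * g y₁ + (b : EReal) * g y₂)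
    (A : X →L[ℝ] Z) (B : Y →L[ℝ] Z) (c : Z)
    (Sf : X →L[ℝ] X) (Sg : Y →L[ℝ] Y) (T : Y →L[ℝ] Y)
    -- `Sf ≻ 0`, `Sg ⪰ 0`, `T ⪰ 0` are self-adjoint
    (hT_sa : ∀ u v : Y, ⟪T u, v⟫ = ⟪u, T v⟫)
    (hSg_psd : ∀ y : Y, 0 ≤ ⟪y, Sg y⟫)
    (hT_psd : ∀ y : Y, 0 ≤ ⟪y, T y⟫)
    -- the subdifferential monotonicity conditions on `f` and `g`
    (hf_mono : ∀ (x₁ x₂ u₁ u₂ : X), IsSubgradAt f u₁ x₁ → IsSubgradAt f u₂ x₂ →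
      ⟪x₁ - x₂, Sf (x₁ - x₂)⟫ ≤ ⟪u₁ - u₂, x₁ - x₂⟫)
    (hg_mono : ∀ (y₁ y₂ v₁ v₂ : Y), IsSubgradAt g v₁ y₁ → IsSubgradAt g v₂ y₂ →
      ⟪y₁ - y₂, Sg (y₁ - y₂)⟫ ≤ ⟪v₁ - v₂, y₁ - y₂⟫)
    (β γ : ℝ) (hβ : 0 < β) (hγ : 0 < γ)
    (x : ℕ → X) (y : ℕ → Y) (z : ℕ → Z)
    -- the proximal AMA iterations
    (hx : ∀ (t : ℕ) (x' : X),
      f (x (t+1)) + ((-⟪z t, A (x (t+1))⟫ : ℝ) : EReal)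
        ≤ f x' + ((-⟪z t, A x'⟫ : ℝ) : EReal))
    (hy : ∀ (t : ℕ) (y' : Y),
      g (y (t+1)) + ((-⟪z t, B (y (t+1))⟫ + β / 2 * ‖A (x (t+1)) + B (y (t+1)) - c‖ ^ 2
          + 1 / 2 * ⟪y (t+1) - y t, T (y (t+1) - y t)⟫ : ℝ) : EReal)
        ≤ g y' + ((-⟪z t, B y'⟫ + β / 2 * ‖A (x (t+1)) + B y' - c‖ ^ 2
          + 1 / 2 * ⟪y' - y t, T (y' - y t)⟫ : ℝ) : EReal))
    (hz : ∀ t : ℕ, z (t+1) = z t - (γ * β) • (A (x (t+1)) + B (y (t+1)) - c))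
    (μ δ σ : ℝ) (hμ : 0 < μ) (hδ : 0 < δ) (hσ : 0 < σ)
    -- condition (ii): `2Σf − (β+μ)A*A ⪰ δI` and `γ + σ ≤ 1 + min{β,μ}/(2β)`
    (hcond2 : ∀ w : X, δ * ‖w‖ ^ 2 ≤ 2 * ⟪w, Sf w⟫ - (β + μ) * ‖A w‖ ^ 2)
    (hcond3 : γ + σ ≤ 1 + min β μ / (2 * β))
    -- `(x̄, ȳ, z̄)` is the limit of the iterates guaranteed by the convergence theorem
    (xb : X) (yb : Y) (zb : Z)
    (hA1f : IsSubgradAt f (ContinuousLinearMap.adjoint A zb) xb)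
    (hA1g : IsSubgradAt g (ContinuousLinearMap.adjoint B zb) yb)
    (hA1c : A xb + B yb - c = 0) :
    ∀ N : ℕ, 1 ≤ N →
      ‖A ((N : ℝ)⁻¹ • ∑ t ∈ Finset.Icc 1 N, x t)
          + B ((N : ℝ)⁻¹ • ∑ t ∈ Finset.Icc 1 N, y t) - c‖
        ≤ 1 / Real.sqrt (N * σ * β) *
          Real.sqrt (1 / (γ * β) * ‖z 0 - zb‖ ^ 2 + ⟪y 0 - yb, T (y 0 - yb)⟫) := by
  intro N hN
  set Φ : ℕ → ℝ := fun t => 1 / (γ * β) * ‖z t - zb‖ ^ 2 + ⟪y t - yb, T (y t - yb)⟫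
  have hΦ : ∀ t, 0 ≤ Φ t := fun t => add_nonneg (by positivity) (hT_psd _)
  have hstep : ∀ t, σ * β * ‖A (x (t + 1)) + B (y (t + 1)) - c‖ ^ 2 ≤ Φ t - Φ (t + 1) := by
    intro t
    have hfx := isSubgradAt_of_forall_add_neg_inner_le_s3 (w := ContinuousLinearMap.adjoint A (z t))
      (by simpa only [ContinuousLinearMap.adjoint_inner_left] using hx t)
    have hgy := isSubgradAt_of_ySubproblem_minimizer hg_ne_bot hg_cvx B hT_sa β _ _ _ _ _ (hy t)
    refine proxAMA_lyapunov_descent A B hT_sa hSg_psd hT_psd hβ hγ hμ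
      (by linarith [min_div_two_mul_le_div_add hβ hμ]) (dx := x (t + 1) - xb)
      (dy := y (t + 1) - yb) (dy₀ := y t - yb) (e := z t - zb) (e' := z (t + 1) - zb)
      (by nlinarith [hcond2 (x (t + 1) - xb)]) ?_ (by rw [hz]; abel) ?_ ?_
    · rw [map_sub, map_sub, ← sub_zero (A (x (t + 1)) + _ - c), ← hA1c]; abel
    · simpa only [← map_sub, ContinuousLinearMap.adjoint_inner_left] using hf_mono _ _ _ _ hfx hA1f
    · have h := hg_mono _ _ _ _ hgy hA1g
      simp only [sub_sub_sub_cancel_right, inner_sub_left, real_inner_smul_left,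
        ContinuousLinearMap.adjoint_inner_left] at h ⊢
      linarith
  have havg := norm_average_le_of_sq_norm_le_sub _ Φ (mul_pos hσ hβ) hΦ hstep hN
  rw [average_residual_eq A B c x y hN, mul_assoc]
  exact havg

/-- **Iteration complexity of the proximal AMA: feasibility bound (Theorem 3.2,
inequality (constraintbd)).** For the ergodic averages
`(x̄^N, ȳ^N) = (1/N)Σ_{t=1}^N (x^t, y^t)` one has
`‖A x̄^N + B ȳ^N − c‖ ≤ (1/√(Nσβ))·√((1/(γβ))‖z⁰ − z̄‖² + ‖y⁰ − ȳ‖²_T)`. -/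
theorem stmt_3
    {X Y Z : Type*}
    [NormedAddCommGroup X] [InnerProductSpace ℝ X] [FiniteDimensional ℝ X]
    [NormedAddCommGroup Y] [InnerProductSpace ℝ Y] [FiniteDimensional ℝ Y]
    [NormedAddCommGroup Z] [InnerProductSpace ℝ Z] [FiniteDimensional ℝ Z]
    (f : X → EReal) (g : Y → EReal)
    -- `f` and `g` are proper
    (hf_ne_bot : ∀ x, f x ≠ ⊥) (hf_proper : ∃ x, f x ≠ ⊤)
    (hg_ne_bot : ∀ y, g y ≠ ⊥) (hg_proper : ∃ y, g y ≠ ⊤)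
    -- `f` and `g` are closed
    (hf_lsc : LowerSemicontinuous f) (hg_lsc : LowerSemicontinuous g)
    -- `f` and `g` are convex
    (hf_cvx : ∀ (x₁ x₂ : X) (a b : ℝ), 0 ≤ a → 0 ≤ b → a + b = 1 →
      f (a • x₁ + b • x₂) ≤ (a : EReal) * f x₁ + (b : EReal) * f x₂)
    (hg_cvx : ∀ (y₁ y₂ : Y) (a b : ℝ), 0 ≤ a → 0 ≤ b → a + b = 1 →
      g (a • y₁ + b • y₂) ≤ (a : EReal) * g y₁ + (b : EReal) * g y₂)
    (A : X →L[ℝ] Z) (B : Y →L[ℝ] Z) (c : Z)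
    (Sf : X →L[ℝ] X) (Sg : Y →L[ℝ] Y) (T : Y →L[ℝ] Y)
    -- `Sf ≻ 0`, `Sg ⪰ 0`, `T ⪰ 0` are self-adjoint
    (hSf_sa : ∀ u v : X, ⟪Sf u, v⟫ = ⟪u, Sf v⟫)
    (hSg_sa : ∀ u v : Y, ⟪Sg u, v⟫ = ⟪u, Sg v⟫)
    (hT_sa : ∀ u v : Y, ⟪T u, v⟫ = ⟪u, T v⟫)
    (hSf_pd : ∀ x : X, x ≠ 0 → 0 < ⟪x, Sf x⟫)
    (hSg_psd : ∀ y : Y, 0 ≤ ⟪y, Sg y⟫)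
    (hT_psd : ∀ y : Y, 0 ≤ ⟪y, T y⟫)
    -- the subdifferential monotonicity conditions on `f` and `g`
    (hf_mono : ∀ (x₁ x₂ u₁ u₂ : X), IsSubgradAt f u₁ x₁ → IsSubgradAt f u₂ x₂ →
      ⟪x₁ - x₂, Sf (x₁ - x₂)⟫ ≤ ⟪u₁ - u₂, x₁ - x₂⟫)
    (hg_mono : ∀ (y₁ y₂ v₁ v₂ : Y), IsSubgradAt g v₁ y₁ → IsSubgradAt g v₂ y₂ →
      ⟪y₁ - y₂, Sg (y₁ - y₂)⟫ ≤ ⟪v₁ - v₂, y₁ - y₂⟫)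
    (β γ : ℝ) (hβ : 0 < β) (hγ : 0 < γ)
    (x : ℕ → X) (y : ℕ → Y) (z : ℕ → Z)
    -- the proximal AMA iterations
    (hx : ∀ (t : ℕ) (x' : X),
      f (x (t+1)) + ((-⟪z t, A (x (t+1))⟫ : ℝ) : EReal)
        ≤ f x' + ((-⟪z t, A x'⟫ : ℝ) : EReal))
    (hy : ∀ (t : ℕ) (y' : Y),
      g (y (t+1)) + ((-⟪z t, B (y (t+1))⟫ + β / 2 * ‖A (x (t+1)) + B (y (t+1)) - c‖ ^ 2
          + 1 / 2 * ⟪y (t+1) - y t, T (y (t+1) - y t)⟫ : ℝ) : EReal)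
        ≤ g y' + ((-⟪z t, B y'⟫ + β / 2 * ‖A (x (t+1)) + B y' - c‖ ^ 2
          + 1 / 2 * ⟪y' - y t, T (y' - y t)⟫ : ℝ) : EReal))
    (hz : ∀ t : ℕ, z (t+1) = z t - (γ * β) • (A (x (t+1)) + B (y (t+1)) - c))
    -- assumption A1
    (hA1 : ∃ (x1 : X) (y1 : Y) (z1 : Z),
      IsSubgradAt f (ContinuousLinearMap.adjoint A z1) x1 ∧
      IsSubgradAt g (ContinuousLinearMap.adjoint B z1) y1 ∧
      A x1 + B y1 - c = 0)
    -- condition (i): `Σg + T + βB*B ≻ 0`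
    (hcond1 : ∀ w : Y, w ≠ 0 → 0 < ⟪w, Sg w⟫ + ⟪w, T w⟫ + β * ‖B w‖ ^ 2)
    (μ δ σ : ℝ) (hμ : 0 < μ) (hδ : 0 < δ) (hσ : 0 < σ)
    -- condition (ii): `2Σf − (β+μ)A*A ⪰ δI` and `γ + σ ≤ 1 + min{β,μ}/(2β)`
    (hcond2 : ∀ w : X, δ * ‖w‖ ^ 2 ≤ 2 * ⟪w, Sf w⟫ - (β + μ) * ‖A w‖ ^ 2)
    (hcond3 : γ + σ ≤ 1 + min β μ / (2 * β))
    -- `(x̄, ȳ, z̄)` is the limit of the iterates guaranteed by the convergence theorem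
    (xb : X) (yb : Y) (zb : Z)
    (hlimx : Tendsto x atTop (𝓝 xb)) (hlimy : Tendsto y atTop (𝓝 yb))
    (hlimz : Tendsto z atTop (𝓝 zb))
    (hA1f : IsSubgradAt f (ContinuousLinearMap.adjoint A zb) xb)
    (hA1g : IsSubgradAt g (ContinuousLinearMap.adjoint B zb) yb)
    (hA1c : A xb + B yb - c = 0) :
    ∀ N : ℕ, 1 ≤ N →
      ‖A ((N : ℝ)⁻¹ • ∑ t ∈ Finset.Icc 1 N, x t)
          + B ((N : ℝ)⁻¹ • ∑ t ∈ Finset.Icc 1 N, y t) - c‖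
        ≤ 1 / Real.sqrt (N * σ * β) *
          Real.sqrt (1 / (γ * β) * ‖z 0 - zb‖ ^ 2 + ⟪y 0 - yb, T (y 0 - yb)⟫) :=
  stmt_3_general f g hg_ne_bot hg_cvx A B c Sf Sg T hT_sa hSg_psd hT_psd hf_mono hg_mono β γ hβ hγ x
    y z hx hy hz μ δ σ hμ hδ hσ hcond2 hcond3 xb yb zb hA1f hA1g hA1c
end
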